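/- Let B be a finite structure in the class of G-symmetric n-ary structures with A ⊆ B, let A' be a structure on A in the non-symmetric class (arbitrary n-ary relation on distinct tuples), and let D be a desymmetrization of B over A': universe B, with relations those of A' together with one representative ordered tuple from each G-orbit of related tuples of B not contained in A. Then for all X ⊆ B, δ_G(X) − δ_G(X ∩ A) computed in B equals δ_ns(X) − δ_ns(X ∩ A) computed in D. Moreover if A ≤_G B then A' ≤_ns D and D lies in the non-symmetric FH class (δ_ns is hereditarily nonnegative on D). -/
import Mathlib


/-- The set of `G`-orbits of `R`-related tuples whose entries all lie in `X`. -/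
def orbitsIn {V : Type*} {n : ℕ} (G : Subgroup (Equiv.Perm (Fin n)))
    (R : Set (Fin n → V)) (X : Finset V) : Set (Set (Fin n → V)) :=
  {O | ∃ t ∈ R, (∀ i, t i ∈ X) ∧ O = {s | ∃ σ ∈ G, s = t ∘ σ}}

/-- The `G`-symmetric predimension: `δ_G(X) = |X| − #(G-orbits of related tuples in X)`. -/
noncomputable def deltaG {V : Type*} {n : ℕ} (G : Subgroup (Equiv.Perm (Fin n)))
    (R : Set (Fin n → V)) (X : Finset V) : ℤ :=
  (X.card : ℤ) - ((orbitsIn G R X).ncard : ℤ)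

/-- The non-symmetric predimension: `δ_ns(X) = |X| − #(related ordered tuples in X)`. -/
noncomputable def deltaNS {V : Type*} {n : ℕ}
    (R : Set (Fin n → V)) (X : Finset V) : ℤ :=
  (X.card : ℤ) - (({t ∈ R | ∀ i, t i ∈ X}).ncard : ℤ)

section Aux

variable {V : Type*} {n : ℕ} (G : Subgroup (Equiv.Perm (Fin n)))

/-- The `G`-orbit of a tuple. -/
def orbG (t : Fin n → V) : Set (Fin n → V) := {s | ∃ σ ∈ G, s = t ∘ σ}

lemma mem_orbG_self (t : Fin n → V) : t ∈ orbG G t :=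
  ⟨1, G.one_mem, by ext i; rfl⟩

lemma orbG_eq {s t : Fin n → V} (hs : s ∈ orbG G t) : orbG G s = orbG G t := by
  obtain ⟨σ, hσ, rfl⟩ := hs
  ext u
  constructor
  · rintro ⟨τ, hτ, rfl⟩
    exact ⟨σ * τ, G.mul_mem hσ hτ, by ext i; simp [Function.comp]⟩
  · rintro ⟨τ, hτ, rfl⟩
    refine ⟨σ⁻¹ * τ, G.mul_mem (G.inv_mem hσ) hτ, ?_⟩
    ext i; simp [Function.comp]

lemma range_eq_of_mem_orbG {s t : Fin n → V} (hs : s ∈ orbG G t) :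
    Set.range s = Set.range t := by
  obtain ⟨σ, hσ, rfl⟩ := hs
  exact σ.surjective.range_comp t

lemma forall_mem_of_mem_orbG {s t : Fin n → V} {X : Set V} (hs : s ∈ orbG G t)
    (ht : ∀ i, t i ∈ X) : ∀ i, s i ∈ X := by
  intro i
  have : s i ∈ Set.range t := by
    rw [← range_eq_of_mem_orbG G hs]; exact ⟨i, rfl⟩
  obtain ⟨j, hj⟩ := this
  rw [← hj]; exact ht j

lemma mem_orbitsIn_iff {R : Set (Fin n → V)} {X : Finset V} {O : Set (Fin n → V)} :
    O ∈ orbitsIn G R X ↔ ∃ t ∈ R, (∀ i, t i ∈ X) ∧ O = orbG G t := Iff.rfl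

lemma tupleSet_finite (R : Set (Fin n → V)) (X : Finset V) :
    {t ∈ R | ∀ i, t i ∈ X}.Finite := by
  have h : {t : Fin n → V | ∀ i, t i ∈ X}.Finite := by
    have := Set.Finite.pi (fun _ : Fin n => X.finite_toSet)
    refine this.subset ?_
    intro t ht
    rw [Set.mem_univ_pi]
    exact fun i => ht i
  exact h.subset (fun t ht => ht.2)

lemma orbitsIn_finite (R : Set (Fin n → V)) (X : Finset V) :
    (orbitsIn G R X).Finite := by
  refine ((tupleSet_finite R X).image (orbG G)).subset ?_
  rintro O ⟨t, htR, htX, rfl⟩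
  exact ⟨t, ⟨htR, htX⟩, rfl⟩

lemma orbitsIn_mono (R : Set (Fin n → V)) {X Y : Finset V} (h : X ⊆ Y) :
    orbitsIn G R X ⊆ orbitsIn G R Y := by
  rintro O ⟨t, htR, htX, rfl⟩
  exact ⟨t, htR, fun i => h (htX i), rfl⟩

end Aux

/-- **Desymmetrization lemma.**  Let `B` be a finite `G`-symmetric structure (relation
`RB`), `A ⊆ B`, and let `A'` be a non-symmetric structure on `A` (relation `RA`).  Let
`D` be a desymmetrization of `B` over `A'`: universe `B` with relation `RA ∪ S`, where
`S` picks exactly one ordered representative from each `G`-orbit of related tuples of `B`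
not contained in `A`.  Then `δ_G(X) − δ_G(X ∩ A)` computed in `B` equals
`δ_ns(X) − δ_ns(X ∩ A)` computed in `D`, for every `X ⊆ B`.  Moreover, if `A ≤_G B` and
`A'` lies in the non-symmetric FH class, then `A' ≤_ns D` and `D` lies in the
non-symmetric FH class (`δ_ns` is nonnegative on all subsets of `D`). -/
theorem stmt15 {V : Type*} [DecidableEq V] {n : ℕ}
    (G : Subgroup (Equiv.Perm (Fin n)))
    (A B : Finset V) (hAB : A ⊆ B)
    (RB RA S : Set (Fin n → V))
    (hRBu : ∀ t ∈ RB, ∀ i, t i ∈ B)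
    (hRBi : ∀ t ∈ RB, Function.Injective t)
    (hRBinv : ∀ t ∈ RB, ∀ σ ∈ G, t ∘ σ ∈ RB)
    (hRAu : ∀ t ∈ RA, ∀ i, t i ∈ A)
    (hRAi : ∀ t ∈ RA, Function.Injective t)
    -- `S` is a `G`-desymmetrization of the relations of `B` over `A`
    (hS1 : S ⊆ RB)
    (hS2 : ∀ t ∈ S, ¬ ∀ i, t i ∈ A)
    (hS3 : ∀ t ∈ RB, (¬ ∀ i, t i ∈ A) → ∃! s, s ∈ S ∧ ∃ σ ∈ G, s = t ∘ σ) :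
    (∀ X : Finset V, X ⊆ B →
      deltaG G RB X - deltaG G RB (X ∩ A) =
        deltaNS (RA ∪ S) X - deltaNS (RA ∪ S) (X ∩ A)) ∧
    ((∀ X : Finset V, A ⊆ X → X ⊆ B → deltaG G RB A ≤ deltaG G RB X) →
     (∀ X : Finset V, X ⊆ A → 0 ≤ deltaNS RA X) →
      ((∀ X : Finset V, A ⊆ X → X ⊆ B → deltaNS (RA ∪ S) A ≤ deltaNS (RA ∪ S) X) ∧
       (∀ X : Finset V, X ⊆ B → 0 ≤ deltaNS (RA ∪ S) X))) := by
  -- key counting fact on the G-side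
  have horb : ∀ X : Finset V,
      (orbitsIn G RB X).ncard
        = (orbitsIn G RB (X ∩ A)).ncard + ({t ∈ S | ∀ i, t i ∈ X}).ncard := by
    intro X
    have hsub : orbitsIn G RB (X ∩ A) ⊆ orbitsIn G RB X :=
      orbitsIn_mono G RB (Finset.inter_subset_left)
    have hfin : (orbitsIn G RB X).Finite := orbitsIn_finite G RB X
    -- the difference is the image of S-tuples in X under orbG
    have himg : orbitsIn G RB X \ orbitsIn G RB (X ∩ A)
        = orbG G '' {t ∈ S | ∀ i, t i ∈ X} := by
      ext O
      constructor
      · rintro ⟨⟨t, htR, htX, rfl⟩, hO⟩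
        have htA : ¬ ∀ i, t i ∈ A := by
          intro hA
          exact hO ⟨t, htR, fun i => Finset.mem_inter.2 ⟨htX i, hA i⟩, rfl⟩
        obtain ⟨s, ⟨hsS, hsorb⟩, _⟩ := hS3 t htR htA
        have hsX : ∀ i, s i ∈ X := forall_mem_of_mem_orbG G hsorb htX
        exact ⟨s, ⟨hsS, hsX⟩, (orbG_eq G hsorb)⟩
      · rintro ⟨t, ⟨htS, htX⟩, rfl⟩
        refine ⟨⟨t, hS1 htS, htX, rfl⟩, ?_⟩
        rintro ⟨t', ht'R, ht'XA, horb'⟩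
        have ht : t ∈ orbG G t' := by
          have h0 : t ∈ orbG G t := mem_orbG_self G t
          rw [horb'] at h0; exact h0
        have : ∀ i, t i ∈ A := fun i =>
          (Finset.mem_inter.1 (forall_mem_of_mem_orbG G ht ht'XA i)).2
        exact hS2 t htS this
      -- end ext
    have hinj : Set.InjOn (orbG G) {t ∈ S | ∀ i, t i ∈ X} := by
      rintro t1 ⟨h1S, _⟩ t2 ⟨h2S, _⟩ he
      have h2 : t2 ∈ orbG G t1 := by rw [he]; exact mem_orbG_self G t2
      obtain ⟨s, _, hu⟩ := hS3 t1 (hS1 h1S) (hS2 t1 h1S)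
      have e1 := hu t1 ⟨h1S, mem_orbG_self G t1⟩
      have e2 := hu t2 ⟨h2S, h2⟩
      rw [e1, e2]
    have hkey := Set.ncard_diff_add_ncard_of_subset hsub hfin
    rw [himg, Set.ncard_image_of_injOn hinj] at hkey
    rw [← hkey, Nat.add_comm]
  -- key counting fact on the NS-side
  have hns : ∀ X : Finset V,
      ({t ∈ RA ∪ S | ∀ i, t i ∈ X}).ncard
        = ({t ∈ RA ∪ S | ∀ i, t i ∈ X ∩ A}).ncard + ({t ∈ S | ∀ i, t i ∈ X}).ncard := by
    intro X
    have h1 : {t ∈ RA ∪ S | ∀ i, t i ∈ X ∩ A} = {t ∈ RA | ∀ i, t i ∈ X ∩ A} := by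
      ext t
      simp only [Set.mem_setOf_eq, Set.mem_union]
      constructor
      · rintro ⟨htR | htS, htX⟩
        · exact ⟨htR, htX⟩
        · exact absurd (fun i => (Finset.mem_inter.1 (htX i)).2) (hS2 t htS)
      · rintro ⟨htR, htX⟩; exact ⟨Or.inl htR, htX⟩
    have h2 : {t ∈ RA ∪ S | ∀ i, t i ∈ X}
        = {t ∈ RA | ∀ i, t i ∈ X ∩ A} ∪ {t ∈ S | ∀ i, t i ∈ X} := by
      ext t
      simp only [Set.mem_setOf_eq, Set.mem_union]
      constructor
      · rintro ⟨htR | htS, htX⟩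
        · exact Or.inl ⟨htR, fun i => Finset.mem_inter.2 ⟨htX i, hRAu t htR i⟩⟩
        · exact Or.inr ⟨htS, htX⟩
      · rintro (⟨htR, htX⟩ | ⟨htS, htX⟩)
        · exact ⟨Or.inl htR, fun i => (Finset.mem_inter.1 (htX i)).1⟩
        · exact ⟨Or.inr htS, htX⟩
    have hdisj : Disjoint {t ∈ RA | ∀ i, t i ∈ X ∩ A} {t ∈ S | ∀ i, t i ∈ X} := by
      rw [Set.disjoint_left]
      rintro t ⟨htR, _⟩ ⟨htS, _⟩
      exact hS2 t htS (hRAu t htR)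
    rw [h1, h2, Set.ncard_union_eq hdisj (tupleSet_finite RA (X ∩ A)) (tupleSet_finite S X)]
  -- main identity
  have main : ∀ X : Finset V,
      deltaG G RB X - deltaG G RB (X ∩ A) =
        deltaNS (RA ∪ S) X - deltaNS (RA ∪ S) (X ∩ A) := by
    intro X
    have h1 := horb X
    have h2 := hns X
    simp only [deltaG, deltaNS]
    rw [h1, h2]
    push_cast
    ring
  refine ⟨fun X _ => main X, ?_⟩
  intro hG hA
  -- deltaNS (RA ∪ S) Y = deltaNS RA Y for Y ⊆ A
  have hsame : ∀ Y : Finset V, Y ⊆ A → deltaNS (RA ∪ S) Y = deltaNS RA Y := by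
    intro Y hY
    have : {t ∈ RA ∪ S | ∀ i, t i ∈ Y} = {t ∈ RA | ∀ i, t i ∈ Y} := by
      ext t
      simp only [Set.mem_setOf_eq, Set.mem_union]
      constructor
      · rintro ⟨htR | htS, htX⟩
        · exact ⟨htR, htX⟩
        · exact absurd (fun i => hY (htX i)) (hS2 t htS)
      · rintro ⟨htR, htX⟩; exact ⟨Or.inl htR, htX⟩
    simp only [deltaNS, this]
  -- submodularity-type inequality: δ_G(X) ≥ δ_G(X ∩ A) for X ⊆ B
  have hmono : ∀ X : Finset V, X ⊆ B → deltaG G RB (X ∩ A) ≤ deltaG G RB X := by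
    intro X hX
    have hcard : (X ∪ A).card + (X ∩ A).card = X.card + A.card :=
      Finset.card_union_add_card_inter X A
    have hUsub : orbitsIn G RB X ∪ orbitsIn G RB A ⊆ orbitsIn G RB (X ∪ A) := by
      rintro O (hO | hO)
      · exact orbitsIn_mono G RB Finset.subset_union_left hO
      · exact orbitsIn_mono G RB Finset.subset_union_right hO
    have hIsub : orbitsIn G RB X ∩ orbitsIn G RB A ⊆ orbitsIn G RB (X ∩ A) := by
      rintro O ⟨⟨t, htR, htX, rfl⟩, ⟨t', ht'R, ht'A, horb'⟩⟩
      have ht' : t' ∈ orbG G t := by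
        have h0 : t' ∈ {s | ∃ σ ∈ G, s = t' ∘ ⇑σ} := ⟨1, G.one_mem, by ext i; rfl⟩
        rw [← horb'] at h0; exact h0
      refine ⟨t', ht'R, fun i => Finset.mem_inter.2
        ⟨forall_mem_of_mem_orbG G ht' htX i, ht'A i⟩, (orbG_eq G ht').symm⟩
    have e1 : (orbitsIn G RB X ∪ orbitsIn G RB A).ncard
        + (orbitsIn G RB X ∩ orbitsIn G RB A).ncard
        = (orbitsIn G RB X).ncard + (orbitsIn G RB A).ncard :=
      Set.ncard_union_add_ncard_inter _ _ (orbitsIn_finite G RB X) (orbitsIn_finite G RB A)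
    have e2 : (orbitsIn G RB X ∪ orbitsIn G RB A).ncard
        ≤ (orbitsIn G RB (X ∪ A)).ncard :=
      Set.ncard_le_ncard hUsub (orbitsIn_finite G RB (X ∪ A))
    have e3 : (orbitsIn G RB X ∩ orbitsIn G RB A).ncard
        ≤ (orbitsIn G RB (X ∩ A)).ncard :=
      Set.ncard_le_ncard hIsub (orbitsIn_finite G RB (X ∩ A))
    have hXA : deltaG G RB A ≤ deltaG G RB (X ∪ A) :=
      hG (X ∪ A) Finset.subset_union_right (Finset.union_subset hX hAB)
    simp only [deltaG] at hXA ⊢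
    omega
  constructor
  · intro X hAX hX
    have hXA : X ∩ A = A := by
      apply Finset.inter_eq_right.2 hAX
    have := main X
    rw [hXA] at this
    have hGX : deltaG G RB A ≤ deltaG G RB X := hG X hAX hX
    omega
  · intro X hX
    have h1 := main X
    have h2 := hmono X hX
    have h3 : 0 ≤ deltaNS (RA ∪ S) (X ∩ A) := by
      rw [hsame (X ∩ A) Finset.inter_subset_right]
      exact hA (X ∩ A) Finset.inter_subset_right
    omega
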